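/- arXiv:math/0402195 — 2 statements merged into one kernel-verified Lean document; each statement's English description precedes it below -/
import Mathlib

section
/- The set of 5×5 real matrices of the form [[2a₁+a₄, a₂, 0, 0, 0], [a₃, a₁+2a₄, 0, 0, 0], [a₅, a₆, a₁+a₄, 0, 0], [a₇, 0, (4/3)a₆, a₁, a₂], [0, a₇, −(4/3)a₅, a₃, a₄]] with a₁,…,a₇ ∈ ℝ is a Lie subalgebra of gl(5,ℝ): it is a linear subspace closed under the matrix commutator [A,B] = AB − BA. -/
open Matrix

/-- The parametrization of the distinguished 7-dimensional family of 5×5 matrices. -/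
noncomputable def cartanMatrix (v : Fin 7 → ℝ) : Matrix (Fin 5) (Fin 5) ℝ :=
  !![2 * v 0 + v 3, v 1, 0, 0, 0;
     v 2, v 0 + 2 * v 3, 0, 0, 0;
     v 4, v 5, v 0 + v 3, 0, 0;
     v 6, 0, (4 / 3) * v 5, v 0, v 1;
     0, v 6, -(4 / 3) * v 4, v 2, v 3]

private theorem cons_val_five' {α : Type*} {m : ℕ} (x : α) (u : Fin (m + 5) → α) :
    vecCons x u 5 = vecHead (vecTail (vecTail (vecTail (vecTail u)))) := rfl

private theorem cons_val_six' {α : Type*} {m : ℕ} (x : α) (u : Fin (m + 6) → α) :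
    vecCons x u 6 = vecHead (vecTail (vecTail (vecTail (vecTail (vecTail u))))) := rfl

private theorem cartan_add (v w : Fin 7 → ℝ) :
    cartanMatrix (v + w) = cartanMatrix v + cartanMatrix w := by
  ext i j
  fin_cases i <;> fin_cases j <;> simp [cartanMatrix] <;> ring

private theorem cartan_smul (c : ℝ) (v : Fin 7 → ℝ) :
    cartanMatrix (c • v) = c • cartanMatrix v := by
  ext i j
  fin_cases i <;> fin_cases j <;> simp [cartanMatrix] <;> ring

set_option maxHeartbeats 4000000 in
private theorem cartan_bracket (v w : Fin 7 → ℝ) :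
    cartanMatrix v * cartanMatrix w - cartanMatrix w * cartanMatrix v =
    cartanMatrix ![v 1 * w 2 - v 2 * w 1,
             v 0 * w 1 - v 3 * w 1 - v 1 * w 0 + v 1 * w 3,
             v 2 * w 0 - v 2 * w 3 - v 0 * w 2 + v 3 * w 2,
             v 2 * w 1 - v 1 * w 2,
             v 4 * w 0 + v 5 * w 2 - v 0 * w 4 - v 2 * w 5,
             v 4 * w 1 + v 5 * w 3 - v 3 * w 5 - v 1 * w 4,
             v 6 * w 0 + v 6 * w 3 + (4/3) * v 5 * w 4
               - v 0 * w 6 - v 3 * w 6 - (4/3) * v 4 * w 5] := by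
  ext i j
  fin_cases i <;> fin_cases j <;>
    simp [cartanMatrix, Matrix.mul_apply, Fin.sum_univ_five, cons_val_five', cons_val_six'] <;>
    ring

/-- The set of matrices of this form is a Lie subalgebra of gl(5,ℝ): it is a linear
subspace closed under the commutator. -/
theorem cartanMatrix_lieSubalgebra :
    (∀ v w : Fin 7 → ℝ, cartanMatrix (v + w) = cartanMatrix v + cartanMatrix w) ∧
    (∀ (c : ℝ) (v : Fin 7 → ℝ), cartanMatrix (c • v) = c • cartanMatrix v) ∧
    (∀ v w : Fin 7 → ℝ, ∃ u : Fin 7 → ℝ,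
      cartanMatrix v * cartanMatrix w - cartanMatrix w * cartanMatrix v = cartanMatrix u) := by
  exact ⟨cartan_add, cartan_smul, fun v w => ⟨_, cartan_bracket v w⟩⟩
end

section
/- Let F(t) = det(S(t) − S(τ)) where S(t) is a smooth curve of 2×2 real symmetric matrices with S'(t) of rank 1 and positive semidefinite for all t, and suppose S'(t) = w(t)·w(t)ᵀ with w(τ), w'(τ) linearly independent. Then F has a zero of order exactly 4 at t = τ. -/
attribute [local instance] Matrix.normedAddCommGroup Matrix.normedSpace

open Matrix

lemma det_order_four_aux (u v u1 u2 u3 v1 v2 v3 A B C D : ℝ → ℝ) (τ : ℝ)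
    (hu : ∀ t, HasDerivAt u (u1 t) t) (hu1 : ∀ t, HasDerivAt u1 (u2 t) t)
    (hu2 : ∀ t, HasDerivAt u2 (u3 t) t)
    (hv : ∀ t, HasDerivAt v (v1 t) t) (hv1 : ∀ t, HasDerivAt v1 (v2 t) t)
    (hv2 : ∀ t, HasDerivAt v2 (v3 t) t)
    (hA : ∀ t, HasDerivAt A (u t * u t) t) (hB : ∀ t, HasDerivAt B (v t * v t) t)
    (hC : ∀ t, HasDerivAt C (u t * v t) t) (hD : ∀ t, HasDerivAt D (v t * u t) t)
    (hA0 : A τ = 0) (hB0 : B τ = 0) (hC0 : C τ = 0) (hD0 : D τ = 0) :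
    (∀ k < 4, iteratedDeriv k (fun t => A t * B t - C t * D t) τ = 0) ∧
      iteratedDeriv 4 (fun t => A t * B t - C t * D t) τ =
        2 * (u1 τ * v τ - u τ * v1 τ) ^ 2 := by
  have hF : ∀ t, HasDerivAt (fun s => A s * B s - C s * D s)
      (u t ^ 2 * B t + v t ^ 2 * A t - u t * v t * (C t + D t)) t := by
    intro t
    have h := ((hA t).mul (hB t)).sub ((hC t).mul (hD t))
    refine h.congr_deriv ?_
    ring
  have hF1 : ∀ t, HasDerivAt (fun s => u s ^ 2 * B s + v s ^ 2 * A s - u s * v s * (C s + D s))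
      (2 * u t * u1 t * B t + 2 * v t * v1 t * A t - (u1 t * v t + u t * v1 t) * (C t + D t)) t := by
    intro t
    have h := ((((hu t).pow 2).mul (hB t)).add (((hv t).pow 2).mul (hA t))).sub
      (((hu t).mul (hv t)).mul ((hC t).add (hD t)))
    refine h.congr_deriv ?_
    simp only [Pi.add_apply, Pi.mul_apply, Pi.pow_apply]
    ring
  have hF2 : ∀ t, HasDerivAt (fun s =>
      2 * u s * u1 s * B s + 2 * v s * v1 s * A s - (u1 s * v s + u s * v1 s) * (C s + D s))
      (2 * (u1 t ^ 2 + u t * u2 t) * B t + 2 * (v1 t ^ 2 + v t * v2 t) * A t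
        - (u2 t * v t + 2 * u1 t * v1 t + u t * v2 t) * (C t + D t)) t := by
    intro t
    have h := (((((hu t).const_mul 2).mul (hu1 t)).mul (hB t)).add
        ((((hv t).const_mul 2).mul (hv1 t)).mul (hA t))).sub
      ((((hu1 t).mul (hv t)).add ((hu t).mul (hv1 t))).mul ((hC t).add (hD t)))
    refine h.congr_deriv ?_
    simp only [Pi.add_apply, Pi.mul_apply, Pi.pow_apply]
    ring
  have hF3 : HasDerivAt (fun s =>
      2 * (u1 s ^ 2 + u s * u2 s) * B s + 2 * (v1 s ^ 2 + v s * v2 s) * A s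
        - (u2 s * v s + 2 * u1 s * v1 s + u s * v2 s) * (C s + D s))
      (2 * (u1 τ * v τ - u τ * v1 τ) ^ 2) τ := by
    have h1 := ((((hu1 τ).pow 2).add ((hu τ).mul (hu2 τ))).const_mul 2).mul (hB τ)
    have h2 := ((((hv1 τ).pow 2).add ((hv τ).mul (hv2 τ))).const_mul 2).mul (hA τ)
    have h3 := ((((hu2 τ).mul (hv τ)).add (((hu1 τ).const_mul 2).mul (hv1 τ))).add
      ((hu τ).mul (hv2 τ))).mul ((hC τ).add (hD τ))
    have h := (h1.add h2).sub h3
    refine h.congr_deriv ?_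
    simp only [Pi.add_apply, Pi.mul_apply, Pi.pow_apply]
    rw [hA0, hB0, hC0, hD0]
    ring
  have hdF : deriv (fun s => A s * B s - C s * D s)
      = fun t => u t ^ 2 * B t + v t ^ 2 * A t - u t * v t * (C t + D t) :=
    funext fun t => (hF t).deriv
  have hdF1 : deriv (fun s => u s ^ 2 * B s + v s ^ 2 * A s - u s * v s * (C s + D s))
      = fun t => 2 * u t * u1 t * B t + 2 * v t * v1 t * A t
        - (u1 t * v t + u t * v1 t) * (C t + D t) :=
    funext fun t => (hF1 t).deriv
  have hdF2 : deriv (fun t => 2 * u t * u1 t * B t + 2 * v t * v1 t * A t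
        - (u1 t * v t + u t * v1 t) * (C t + D t))
      = fun t => 2 * (u1 t ^ 2 + u t * u2 t) * B t + 2 * (v1 t ^ 2 + v t * v2 t) * A t
        - (u2 t * v t + 2 * u1 t * v1 t + u t * v2 t) * (C t + D t) :=
    funext fun t => (hF2 t).deriv
  constructor
  · intro k hk
    interval_cases k
    · simp [hA0, hC0]
    · rw [iteratedDeriv_one, hdF]; simp only [hA0, hB0, hC0, hD0]; ring
    · rw [show (2:ℕ) = 1 + 1 from rfl, iteratedDeriv_succ', hdF, iteratedDeriv_one, hdF1]
      simp only [hA0, hB0, hC0, hD0]; ring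
    · rw [show (3:ℕ) = 2 + 1 from rfl, iteratedDeriv_succ', hdF,
        show (2:ℕ) = 1 + 1 from rfl, iteratedDeriv_succ', hdF1, iteratedDeriv_one, hdF2]
      simp only [hA0, hB0, hC0, hD0]; ring
  · rw [show (4:ℕ) = 3 + 1 from rfl, iteratedDeriv_succ', hdF,
      show (3:ℕ) = 2 + 1 from rfl, iteratedDeriv_succ', hdF1,
      show (2:ℕ) = 1 + 1 from rfl, iteratedDeriv_succ', hdF2, iteratedDeriv_one]
    exact hF3.deriv

/-- For a rank-1 nondecreasing curve of 2×2 symmetric matrices `S` with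
`S'(t) = w(t)w(t)ᵀ` and `w(τ), w'(τ)` linearly independent, the function
`t ↦ det(S(t) − S(τ))` has a zero of order exactly 4 at `τ`. -/
theorem det_order_four (S : ℝ → Matrix (Fin 2) (Fin 2) ℝ) (w : ℝ → Fin 2 → ℝ)
    (hS : ContDiff ℝ (⊤ : ℕ∞) S) (hw : ContDiff ℝ (⊤ : ℕ∞) w)
    (hsymm : ∀ t, (S t).IsSymm)
    (hrank : ∀ t, deriv S t = vecMulVec (w t) (w t))
    (τ : ℝ) (hindep : LinearIndependent ℝ ![w τ, deriv w τ]) :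
    (∀ k < 4, iteratedDeriv k (fun t => (S t - S τ).det) τ = 0) ∧
      iteratedDeriv 4 (fun t => (S t - S τ).det) τ ≠ 0 := by
  -- entry functions of w
  have hwc : ∀ i, ContDiff ℝ (⊤ : ℕ∞) (fun t => w t i) := fun i => contDiff_pi.mp hw i
  have hwd : ∀ (t : ℝ) i, HasDerivAt (fun s => w s i) (deriv w t i) t := fun t i =>
    hasDerivAt_pi.mp ((hw.differentiable (by simp) t).hasDerivAt) i
  -- u, v and their derivatives
  set u : ℝ → ℝ := fun t => w t 0 with hu_def
  set v : ℝ → ℝ := fun t => w t 1 with hv_def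
  have hucd : ContDiff ℝ (⊤ : ℕ∞) (u) := (hwc 0).of_le (by simp)
  have hvcd : ContDiff ℝ (⊤ : ℕ∞) (v) := (hwc 1).of_le (by simp)
  have hu1cd : ContDiff ℝ (⊤ : ℕ∞) (deriv u) := (contDiff_infty_iff_deriv.mp hucd).2
  have hv1cd : ContDiff ℝ (⊤ : ℕ∞) (deriv v) := (contDiff_infty_iff_deriv.mp hvcd).2
  have hu2cd : ContDiff ℝ (⊤ : ℕ∞) (deriv (deriv u)) := (contDiff_infty_iff_deriv.mp hu1cd).2
  have hv2cd : ContDiff ℝ (⊤ : ℕ∞) (deriv (deriv v)) := (contDiff_infty_iff_deriv.mp hv1cd).2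
  have hu' : ∀ t, HasDerivAt u (deriv u t) t := fun t =>
    (hucd.differentiable (by simp) t).hasDerivAt
  have hv' : ∀ t, HasDerivAt v (deriv v t) t := fun t =>
    (hvcd.differentiable (by simp) t).hasDerivAt
  have hu1' : ∀ t, HasDerivAt (deriv u) (deriv (deriv u) t) t := fun t =>
    (hu1cd.differentiable (by simp) t).hasDerivAt
  have hv1' : ∀ t, HasDerivAt (deriv v) (deriv (deriv v) t) t := fun t =>
    (hv1cd.differentiable (by simp) t).hasDerivAt
  have hu2' : ∀ t, HasDerivAt (deriv (deriv u)) (deriv (deriv (deriv u)) t) t := fun t =>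
    (hu2cd.differentiable (by simp) t).hasDerivAt
  have hv2' : ∀ t, HasDerivAt (deriv (deriv v)) (deriv (deriv (deriv v)) t) t := fun t =>
    (hv2cd.differentiable (by simp) t).hasDerivAt
  -- entry functions of S - S τ and their derivatives
  have hSij : ∀ (t : ℝ) (i j : Fin 2),
      HasDerivAt (fun s => S s i j - S τ i j) (w t i * w t j) t := by
    intro t i j
    have h : HasDerivAt S (deriv S t) t := (hS.differentiable (by simp) t).hasDerivAt
    rw [hrank t] at h
    have h2 := hasDerivAt_pi.mp (hasDerivAt_pi.mp h i) j
    rw [vecMulVec_apply] at h2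
    exact h2.sub_const _
  -- apply the aux lemma
  have key := det_order_four_aux u v (deriv u) (deriv (deriv u)) (deriv (deriv (deriv u)))
    (deriv v) (deriv (deriv v)) (deriv (deriv (deriv v)))
    (fun t => S t 0 0 - S τ 0 0) (fun t => S t 1 1 - S τ 1 1)
    (fun t => S t 0 1 - S τ 0 1) (fun t => S t 1 0 - S τ 1 0) τ
    hu' hu1' hu2' hv' hv1' hv2'
    (fun t => hSij t 0 0) (fun t => hSij t 1 1) (fun t => hSij t 0 1) (fun t => hSij t 1 0)
    (sub_self _) (sub_self _) (sub_self _) (sub_self _)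
  have hfun : (fun t => (S t - S τ).det)
      = fun t => (S t 0 0 - S τ 0 0) * (S t 1 1 - S τ 1 1)
        - (S t 0 1 - S τ 0 1) * (S t 1 0 - S τ 1 0) := by
    funext t
    simp [Matrix.det_fin_two, Matrix.sub_apply]
  rw [hfun]
  refine ⟨key.1, ?_⟩
  rw [key.2]
  -- nonvanishing from linear independence
  have hd : deriv u τ * v τ - u τ * deriv v τ ≠ 0 := by
    intro h0
    have hM : LinearIndependent ℝ (Matrix.of ![w τ, deriv w τ]).row := hindep
    rw [Matrix.linearIndependent_rows_iff_isUnit, Matrix.isUnit_iff_isUnit_det,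
      isUnit_iff_ne_zero] at hM
    apply hM
    rw [Matrix.det_fin_two]
    have e0 : deriv u τ = deriv w τ 0 := ((hwd τ 0)).deriv
    have e1 : deriv v τ = deriv w τ 1 := ((hwd τ 1)).deriv
    simp only [Matrix.of_apply, Matrix.cons_val', Matrix.cons_val_zero, Matrix.cons_val_one,
      Matrix.head_cons, Matrix.empty_val', Matrix.cons_val_fin_one, Matrix.head_fin_const]
    rw [← e0, ← e1] at *
    simp only [hu_def, hv_def] at h0 ⊢
    linarith [h0]
  positivity
end
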